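/- The behavior predicate fs_beh decomposes along the monadic bind: for every m : io α, continuation k : α → io β, history h, local trace lt relative to h, and result r : β, if fs_beh (io_bind m k) h lt r holds, then there exist a local trace lt1 relative to h, an intermediate result r1 : α, and a local trace lt2 relative to h ++ lt1 such that lt = lt1 @ lt2, fs_beh m h lt1 r1, and fs_beh (k r1) (h ++ lt1) lt2 r. -/
import Mathlib


set_option linter.unusedVariables false

/-- File descriptors, modelled as natural numbers. -/
abbrev file_descr := Nat

/-- An event records an IO operation together with its argument and result
(left injection for success, right injection for failure). -/
inductive event : Type where
| EvOpen : String → Sum file_descr String → event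
| EvRead : file_descr → Sum String String → event
| EvWrite : file_descr × String → Sum Unit String → event
| EvClose : file_descr → Sum Unit String → event

/-- A history is a list of past events, most recent first. -/
abbrev history := List event

/-- A file descriptor fresh with respect to a history. -/
def fresh_fd (h : history) : file_descr := h.length

/-- An event is admissible w.r.t. a history: successful opens must use a fresh
file descriptor. -/
def ev_ok (h : history) : event → Prop
| event.EvOpen _ (Sum.inl fd) => fd = fresh_fd h
| _ => True

/-- Well-formedness of a trace with respect to a history. -/
def well_formed_local_trace (h : history) : List event → Prop
| [] => True
| ev :: tl => ev_ok h ev ∧ well_formed_local_trace (ev :: h) tl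

/-- Local traces relative to a history `h`: traces well formed w.r.t. `h`. -/
def local_trace (h : history) := {lt : List event // well_formed_local_trace h lt}

/-- `hist_ext h lt` (written `h ++ lt` in the paper): the history obtained by
prepending the reverse of the trace `lt` to `h`. -/
def hist_ext (h : history) (lt : List event) : history := lt.reverse ++ h

theorem wf_lt_append (lt1 : List event) (h : history) (lt2 : List event)
    (h1 : well_formed_local_trace h lt1)
    (h2 : well_formed_local_trace (hist_ext h lt1) lt2) :
    well_formed_local_trace h (lt1 ++ lt2) := by
  induction lt1 generalizing h with
  | nil => simpa [hist_ext] using h2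
  | cons ev tl ih =>
    obtain ⟨hok, htl⟩ := h1
    refine ⟨hok, ih (ev :: h) htl ?_⟩
    simpa [hist_ext, List.append_assoc] using h2

/-- Concatenation of local traces (written `lt @ lt'` in the paper). -/
def ltapp {h : history} (lt1 : local_trace h) (lt2 : local_trace (hist_ext h lt1.val)) :
    local_trace h :=
  ⟨lt1.val ++ lt2.val, wf_lt_append lt1.val h lt2.val lt1.property lt2.property⟩

/-- The empty local trace. -/
def nil_lt (h : history) : local_trace h := ⟨[], trivial⟩

/-- Postconditions over a local trace and a result. -/
def hist_post (h : history) (α : Type) := local_trace h → α → Prop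

/-- Predicate transformers mapping postconditions to preconditions. -/
def hist0 (α : Type) := (h : history) → hist_post h α → Prop

/-- Monotonicity of a predicate transformer. -/
def hist_wp_monotonic {α : Type} (wp : hist0 α) : Prop :=
  ∀ (h : history) (p1 p2 : hist_post h α),
    (∀ lt r, p1 lt r → p2 lt r) → wp h p1 → wp h p2

/-- The hist monad: monotonic predicate transformers. -/
def hist (α : Type) := {wp : hist0 α // hist_wp_monotonic wp}

def hist_return {α : Type} (x : α) : hist α :=
  ⟨fun h p => p (nil_lt h) x, fun h p1 p2 hp hw => hp _ _ hw⟩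

def hist_bind {α β : Type} (w : hist α) (k : α → hist β) : hist β :=
  ⟨fun h p => w.val h (fun lt r => (k r).val (hist_ext h lt.val)
      (fun lt' r' => p (ltapp lt lt') r')),
   by
     intro h p1 p2 hp hw
     refine w.property h _ _ ?_ hw
     intro lt r hk
     refine (k r).property _ _ _ ?_ hk
     intro lt' r' hpp
     exact hp _ _ hpp⟩

/-- Pointwise equivalence of predicate transformers. -/
def hist_equiv {α : Type} (w1 w2 : hist α) : Prop := ∀ h p, w1.val h p ↔ w2.val h p

/-- The file operations. -/
inductive io_ops : Type where
| OOpen | ORead | OWrite | OClose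

/-- Argument type of each operation. -/
def io_args : io_ops → Type
| .OOpen => String
| .ORead => file_descr
| .OWrite => file_descr × String
| .OClose => file_descr

/-- Result type of each operation (Either-valued: possibly failing). -/
def io_res (o : io_ops) : io_args o → Type := fun _ =>
  match o with
  | .OOpen => Sum file_descr String
  | .ORead => Sum String String
  | .OWrite => Sum Unit String
  | .OClose => Sum Unit String

/-- The free IO monad. -/
inductive io (α : Type) : Type where
| Return : α → io α
| Call : (o : io_ops) → (args : io_args o) → (io_res o args → io α) → io α

def io_return {α : Type} (x : α) : io α := .Return x

def io_bind {α β : Type} : io α → (α → io β) → io β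
| .Return x, k => k x
| .Call o args ok, k => .Call o args (fun i => io_bind (ok i) k)

/-- Turn an operation call and result into an event. -/
def op_to_ev : (o : io_ops) → (args : io_args o) → io_res o args → event
| .OOpen, s, r => .EvOpen s r
| .ORead, fd, r => .EvRead fd r
| .OWrite, a, r => .EvWrite a r
| .OClose, fd, r => .EvClose fd r

/-- The operation's postcondition: a successful open returns `fresh_fd h`. -/
def io_post (h : history) : (o : io_ops) → (args : io_args o) → io_res o args → Prop
| .OOpen, _, Sum.inl fd => fd = fresh_fd h
| .OOpen, _, Sum.inr _ => True
| .ORead, _, _ => True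
| .OWrite, _, _ => True
| .OClose, _, _ => True

/-- Specification of an operation as a predicate transformer. -/
def op_wp (o : io_ops) (args : io_args o) : hist (io_res o args) :=
  ⟨fun h p => ∀ (lt : local_trace h) (r : io_res o args),
      (io_post h o args r ∧ lt.val = [op_to_ev o args r]) → p lt r,
   fun h p1 p2 hp hw lt r hc => hp _ _ (hw lt r hc)⟩

/-- Weakest-precondition semantics of free IO computations. -/
def theta {α : Type} : io α → hist α
| .Return x => hist_return x
| .Call o args k => hist_bind (op_wp o args) (fun r => theta (k r))

/-- The behavior (strongest postcondition) of an IO computation. -/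
def fs_beh {α : Type} (m : io α) (h : history) (lt : local_trace h) (r : α) : Prop :=
  ∀ p : hist_post h α, (theta m).val h p → p lt r

lemma theta_sp {α : Type} (m : io α) (h : history) :
    (theta m).val h (fun lt r => fs_beh m h lt r) := by
  induction m generalizing h with
  | Return x =>
    exact fun p hp => hp
  | Call o args ok ih =>
    intro lt0 r0 hc
    refine (theta (ok r0)).property _ _ _ ?_ (ih r0 (hist_ext h lt0.val))
    intro lt' r' hfs p hp
    exact hfs _ (hp lt0 r0 hc)

def lt_cast {H1 H2 : history} (e : H1 = H2) (l : local_trace H1) : local_trace H2 := e ▸ l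

lemma lt_cast_val {H1 H2 : history} (e : H1 = H2) (l : local_trace H1) :
    (lt_cast e l).val = l.val := by subst e; rfl

lemma fs_beh_cast {γ : Type} (mk : io γ) {H1 H2 : history} (e : H1 = H2)
    (l : local_trace H1) (r : γ) (hf : fs_beh mk H1 l r) : fs_beh mk H2 (lt_cast e l) r := by
  subst e; exact hf

lemma hist_ext_assoc (h : history) (l1 l2 : List event) :
    hist_ext (hist_ext h l1) l2 = hist_ext h (l1 ++ l2) := by
  simp [hist_ext, List.reverse_append, List.append_assoc]

/-- `fs_beh` decomposes along monadic bind. -/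
theorem fs_beh_bind_decompose {α β : Type} (m : io α) (k : α → io β) (h : history)
    (lt : local_trace h) (r : β) (hb : fs_beh (io_bind m k) h lt r) :
    ∃ (lt1 : local_trace h) (r1 : α) (lt2 : local_trace (hist_ext h lt1.val)),
      lt = ltapp lt1 lt2 ∧ fs_beh m h lt1 r1 ∧
      fs_beh (k r1) (hist_ext h lt1.val) lt2 r := by
  induction m generalizing h lt r with
  | Return x =>
    exact ⟨nil_lt h, x, lt, rfl, fun p hp => hp, hb⟩
  | Call o args ok ih =>
    refine hb (fun lt r => ∃ (lt1 : local_trace h) (r1 : α)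
        (lt2 : local_trace (hist_ext h lt1.val)),
        lt = ltapp lt1 lt2 ∧ fs_beh (io.Call o args ok) h lt1 r1 ∧
        fs_beh (k r1) (hist_ext h lt1.val) lt2 r) ?_
    intro lt0 r0 hc
    refine (theta (io_bind (ok r0) k)).property _ _ _ ?_
      (theta_sp (io_bind (ok r0) k) (hist_ext h lt0.val))
    intro lt' r' hfs
    obtain ⟨lt1', r1, lt2, hEq, hm, hk⟩ := ih r0 (hist_ext h lt0.val) lt' r' hfs
    refine ⟨ltapp lt0 lt1', r1,
      lt_cast (hist_ext_assoc h lt0.val lt1'.val) lt2, ?_, ?_, ?_⟩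
    · apply Subtype.ext
      simp [ltapp, hEq, lt_cast_val]
    · intro p hp
      exact hm _ (hp lt0 r0 hc)
    · exact fs_beh_cast (k r1) _ lt2 r' hk
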